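/- arXiv:2409.01092 — 3 statements merged into one kernel-verified Lean document; each statement's English description precedes it below -/
import Mathlib

section
/- Let Y : ℕ → ℝ satisfy Y(n+1) = max(Y(n) + X(n) − ε, 0) with X(n) ∈ {0,1}, 0 ≤ ε ≤ 1, and Y(0) ≥ 0. Then ∑_{n=0}^{T−1} Y(n)·(X(n) − ε) ≤ Y(0)·∑_{n=0}^{T−1} (X(n) − ε) + ∑_{n=0}^{T−1} n·((1 − ε)·X(n) + ε²). -/
theorem coupled_term_bound (Y X : ℕ → ℝ) (ε : ℝ) (T : ℕ)
    (hrec : ∀ n, Y (n + 1) = max (Y n + X n - ε) 0)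
    (hX : ∀ n, X n = 0 ∨ X n = 1)
    (hε0 : 0 ≤ ε) (hε1 : ε ≤ 1) (hY0 : 0 ≤ Y 0) :
    ∑ n ∈ Finset.range T, Y n * (X n - ε) ≤
      Y 0 * ∑ n ∈ Finset.range T, (X n - ε) +
        ∑ n ∈ Finset.range T, (n : ℝ) * ((1 - ε) * X n + ε ^ 2) := by
  have hub : ∀ n, Y n ≤ Y 0 + n * (1 - ε) := by
    intro n
    induction n with
    | zero => simp
    | succ n ih =>
      rw [hrec n]
      have hx : X n ≤ 1 := by rcases hX n with h | h <;> rw [h] <;> norm_num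
      have h1 : Y n + X n - ε ≤ Y 0 + (n + 1 : ℕ) * (1 - ε) := by
        push_cast; nlinarith
      have h2 : (0:ℝ) ≤ Y 0 + (n + 1 : ℕ) * (1 - ε) := by
        push_cast; nlinarith
      exact max_le h1 h2
  have hlb : ∀ n, Y 0 - n * ε ≤ Y n := by
    intro n
    induction n with
    | zero => simp
    | succ n ih =>
      rw [hrec n]
      have hx : 0 ≤ X n := by rcases hX n with h | h <;> rw [h] <;> norm_num
      have : Y 0 - (n + 1 : ℕ) * ε ≤ Y n + X n - ε := by push_cast; nlinarith
      exact le_max_of_le_left this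
  rw [Finset.mul_sum, ← Finset.sum_add_distrib]
  apply Finset.sum_le_sum
  intro n _
  rcases hX n with h | h
  · rw [h]
    have := hlb n
    nlinarith [sq_nonneg ε]
  · rw [h]
    have := hub n
    nlinarith [sq_nonneg ε, Nat.cast_nonneg (α := ℝ) n]
end

section
/- Let Y : ℕ → ℝ satisfy Y(n+1) = max(Y(n) + X(n) − ε, 0) with X(n) ∈ {0,1}, 0 ≤ ε ≤ 1, and Y(0) ≥ 0. Then for any T ≥ 1, (1/2)·Y(T)^2 − (1/2)·Y(0)^2 ≤ (1/2)·∑_{n=0}^{T−1} X(n) + (T/2)·ε² + Y(0)·∑_{n=0}^{T−1}(X(n) − ε) + ∑_{n=0}^{T−1} n·((1 − ε)·X(n) + ε²). -/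
theorem drift_bound_initial_queue (Y X : ℕ → ℝ) (ε : ℝ)
    (hrec : ∀ n, Y (n + 1) = max (Y n + X n - ε) 0)
    (hX : ∀ n, X n = 0 ∨ X n = 1)
    (hε0 : 0 ≤ ε) (hε1 : ε ≤ 1) (hY0 : 0 ≤ Y 0) :
    ∀ T : ℕ, 1 ≤ T →
      (1 / 2) * (Y T) ^ 2 - (1 / 2) * (Y 0) ^ 2 ≤
        (1 / 2) * ∑ n ∈ Finset.range T, X n + ((T : ℝ) / 2) * ε ^ 2 +
          Y 0 * ∑ n ∈ Finset.range T, (X n - ε) +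
          ∑ n ∈ Finset.range T, (n : ℝ) * ((1 - ε) * X n + ε ^ 2) := by
  have hYnn : ∀ n, 0 ≤ Y n := by
    intro n
    cases n with
    | zero => exact hY0
    | succ m => rw [hrec]; exact le_max_right _ _
  have hup : ∀ n, Y n ≤ Y 0 + n * (1 - ε) := by
    intro n
    induction n with
    | zero => simp
    | succ m ih =>
      rw [hrec m]
      push_cast
      rcases hX m with h | h <;> rw [h] <;> apply max_le <;>
        nlinarith [hYnn m, Nat.cast_nonneg (α := ℝ) m]
  have hlow : ∀ n, Y 0 - n * ε ≤ Y n := by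
    intro n
    induction n with
    | zero => simp
    | succ m ih =>
      rw [hrec m]
      push_cast
      rcases hX m with h | h <;> rw [h] <;>
        exact le_max_of_le_left (by linarith)
  have step : ∀ n : ℕ, (1/2) * (Y (n+1))^2 - (1/2) * (Y n)^2 ≤
      (1/2) * X n + (1/2) * ε^2 + Y 0 * (X n - ε) + (n : ℝ) * ((1-ε) * X n + ε^2) := by
    intro n
    have h1 : (Y (n+1))^2 ≤ (Y n + X n - ε)^2 := by
      rw [hrec n]
      rcases le_or_gt 0 (Y n + X n - ε) with h | h
      · rw [max_eq_left h]
      · rw [max_eq_right h.le]; simpa using sq_nonneg (Y n + X n - ε)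
    have h2 : Y n * (X n - ε) ≤ Y 0 * (X n - ε) + (n : ℝ) * ((1-ε) * X n + ε^2) := by
      rcases hX n with h | h <;> rw [h]
      · nlinarith [hlow n, hε0, Nat.cast_nonneg (α := ℝ) n]
      · nlinarith [hup n, hε0, hε1, Nat.cast_nonneg (α := ℝ) n]
    rcases hX n with h | h <;> rw [h] at h1 h2 ⊢ <;> nlinarith
  have main : ∀ T : ℕ,
      (1 / 2) * (Y T) ^ 2 - (1 / 2) * (Y 0) ^ 2 ≤
        (1 / 2) * ∑ n ∈ Finset.range T, X n + ((T : ℝ) / 2) * ε ^ 2 +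
          Y 0 * ∑ n ∈ Finset.range T, (X n - ε) +
          ∑ n ∈ Finset.range T, (n : ℝ) * ((1 - ε) * X n + ε ^ 2) := by
    intro T
    induction T with
    | zero => simp
    | succ m ih =>
      rw [Finset.sum_range_succ, Finset.sum_range_succ, Finset.sum_range_succ]
      push_cast
      have := step m
      linarith
  exact fun T _ => main T
end

section
/- Let X : ℕ → {0,1} be i.i.d. Bernoulli(λ) and Y the virtual queue Y(n+1) = max(Y(n) + X(n) − ε, 0), Y(0) = y₀ ≥ 0, 0 ≤ ε ≤ 1. Then E[(1/2)Y(T)² − (1/2)Y(0)²] ≤ B₂·T + y₀·E[∑_{n=0}^{T−1}(X(n) − ε)], where B₂ = (λ + ε²)/2 + (T − 1)·((1 − ε)λ + ε²)/2. -/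
/-!
Along every path the queue grows by at most `1 - ε` and shrinks by at most `ε` per slot, so
`y₀ - n ε ≤ Y(n) ≤ y₀ + n (1 - ε)`. Dropping the `max` only enlarges `Y(n+1)²`, and
`(Y + X - ε)² - Y² = 2 Y (X - ε) + (X - ε)²`; replacing `Y(n)` in the cross term by the bound
matching the sign of `X(n) - ε` gives a one-step drift bound that is affine in `X(n)` and no
longer involves `Y`. Telescoping and taking expectations then only needs `E[X(n)] = λ`.
-/

open MeasureTheory ProbabilityTheory Finset

noncomputable def driftBound (ε : ℝ) (n : ℕ) (x : ℝ) : ℝ :=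
  (x + ε ^ 2) / 2 + n * ((1 - ε) * x + ε ^ 2)

lemma driftBound_eq (ε : ℝ) (n : ℕ) (x : ℝ) :
    driftBound ε n x = (1 / 2 + n * (1 - ε)) * x + (ε ^ 2 / 2 + n * ε ^ 2) := by
  unfold driftBound; ring

lemma half_sq_max_sub_half_sq_le {y x ε y₀ : ℝ} {n : ℕ} (hx : x = 0 ∨ x = 1)
    (hε0 : 0 ≤ ε) (hε1 : ε ≤ 1) (hlb : y₀ - n * ε ≤ y) (hub : y ≤ y₀ + n * (1 - ε)) :
    (1 / 2) * max (y + x - ε) 0 ^ 2 - (1 / 2) * y ^ 2 ≤ driftBound ε n x + y₀ * (x - ε) := by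
  have hsq : max (y + x - ε) 0 ^ 2 ≤ (y + x - ε) ^ 2 := by
    rcases le_total 0 (y + x - ε) with h | h
    · rw [max_eq_left h]
    · simpa [max_eq_right h] using sq_nonneg (y + x - ε)
  have hn : (0 : ℝ) ≤ n := n.cast_nonneg
  unfold driftBound
  rcases hx with rfl | rfl
  · nlinarith [mul_le_mul_of_nonneg_left hlb hε0]
  · nlinarith [mul_le_mul_of_nonneg_left hub (sub_nonneg.2 hε1), mul_nonneg hn hε0]

namespace VirtualQueue

variable {x y : ℕ → ℝ} {ε : ℝ}

lemma nonneg (hrec : ∀ n, y (n + 1) = max (y n + x n - ε) 0) (hy0 : 0 ≤ y 0) :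
    ∀ n, 0 ≤ y n
  | 0 => hy0
  | n + 1 => (hrec n).symm ▸ le_max_right _ _

lemma le_add_mul (hrec : ∀ n, y (n + 1) = max (y n + x n - ε) 0) (hy0 : 0 ≤ y 0)
    (hx : ∀ n, x n ≤ 1) (hε1 : ε ≤ 1) : ∀ n : ℕ, y n ≤ y 0 + n * (1 - ε)
  | 0 => by simp
  | n + 1 => by
    have ih := le_add_mul hrec hy0 hx hε1 n
    rw [hrec n]
    push_cast
    exact max_le (by linarith [hx n]) (by nlinarith [n.cast_nonneg (α := ℝ)])

lemma sub_mul_le (hrec : ∀ n, y (n + 1) = max (y n + x n - ε) 0) (hx : ∀ n, 0 ≤ x n) :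
    ∀ n : ℕ, y 0 - n * ε ≤ y n
  | 0 => by simp
  | n + 1 => by
    have ih := sub_mul_le hrec hx n
    rw [hrec n]
    push_cast
    exact le_max_of_le_left (by linarith [hx n])

lemma half_sq_sub_half_sq_le (hrec : ∀ n, y (n + 1) = max (y n + x n - ε) 0)
    (hx : ∀ n, x n = 0 ∨ x n = 1) (hy0 : 0 ≤ y 0) (hε0 : 0 ≤ ε) (hε1 : ε ≤ 1) (T : ℕ) :
    (1 / 2) * y T ^ 2 - (1 / 2) * y 0 ^ 2 ≤
      ∑ n ∈ range T, driftBound ε n (x n) + y 0 * ∑ n ∈ range T, (x n - ε) := by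
  have hx0 n : 0 ≤ x n := by rcases hx n with h | h <;> simp [h]
  have hx1 n : x n ≤ 1 := by rcases hx n with h | h <;> simp [h]
  rw [← sum_range_sub (fun n => (1 / 2) * y n ^ 2), mul_sum, ← sum_add_distrib]
  refine sum_le_sum fun n _ => ?_
  rw [hrec n]
  exact half_sq_max_sub_half_sq_le (hx n) hε0 hε1 (sub_mul_le hrec hx0 n)
    (le_add_mul hrec hy0 hx1 hε1 n)

end VirtualQueue

section

variable {Ω : Type*} [MeasurableSpace Ω] {μ : Measure Ω} {X Y : ℕ → Ω → ℝ} {ε : ℝ}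

lemma measurable_of_virtualQueue (hXmeas : ∀ n, Measurable (X n)) (hY0 : Measurable (Y 0))
    (hrec : ∀ n ω, Y (n + 1) ω = max (Y n ω + X n ω - ε) 0) : ∀ n, Measurable (Y n)
  | 0 => hY0
  | n + 1 => by
    rw [show Y (n + 1) = _ from funext (hrec n)]
    exact (((measurable_of_virtualQueue hXmeas hY0 hrec n).add (hXmeas n)).sub
      measurable_const).max measurable_const

lemma integrable_sq_of_virtualQueue [IsFiniteMeasure μ] {y₀ : ℝ}
    (hXmeas : ∀ n, Measurable (X n)) (hX1 : ∀ n ω, X n ω ≤ 1) (hy₀ : 0 ≤ y₀) (hε1 : ε ≤ 1)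
    (hY0 : ∀ ω, Y 0 ω = y₀) (hrec : ∀ n ω, Y (n + 1) ω = max (Y n ω + X n ω - ε) 0) (n : ℕ) :
    Integrable (fun ω => Y n ω ^ 2) μ := by
  have hmeas := measurable_of_virtualQueue hXmeas (by simp [funext hY0]) hrec n
  refine .of_bound (hmeas.pow_const 2).aestronglyMeasurable ((y₀ + n * (1 - ε)) ^ 2)
    (.of_forall fun ω => ?_)
  have hrec' : ∀ k, Y (k + 1) ω = max (Y k ω + X k ω - ε) 0 := (hrec · ω)
  have hy0 : 0 ≤ Y 0 ω := hY0 ω ▸ hy₀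
  rw [Real.norm_eq_abs, abs_pow, sq_abs, ← hY0 ω]
  exact pow_le_pow_left₀ (VirtualQueue.nonneg (y := (Y · ω)) hrec' hy0 n)
    (VirtualQueue.le_add_mul (y := (Y · ω)) hrec' hy0 (fun k => hX1 k ω) hε1 n) 2

lemma integrable_of_zero_or_one [IsFiniteMeasure μ] {f : Ω → ℝ} (hf : Measurable f)
    (h01 : ∀ ω, f ω = 0 ∨ f ω = 1) : Integrable f μ :=
  .of_bound hf.aestronglyMeasurable 1 (.of_forall fun ω => by rcases h01 ω with h | h <;> simp [h])

lemma integrable_driftBound [IsFiniteMeasure μ] {f : Ω → ℝ} (hf : Integrable f μ) {n : ℕ} :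
    Integrable (fun ω => driftBound ε n (f ω)) μ := by
  simp only [driftBound_eq]
  exact (hf.const_mul _).add (integrable_const _)

lemma sum_range_add_mul (a b : ℝ) (T : ℕ) :
    ∑ n ∈ range T, (a + n * b) = (a + ((T : ℝ) - 1) * b / 2) * T := by
  induction T with
  | zero => simp
  | succ T ih => rw [sum_range_succ, ih]; push_cast; ring

lemma integral_sum_range_driftBound [IsProbabilityMeasure μ] {lam : ℝ}
    (hX : ∀ n, Integrable (X n) μ) (hmean : ∀ n, ∫ ω, X n ω ∂μ = lam) (T : ℕ) :
    ∫ ω, ∑ n ∈ range T, driftBound ε n (X n ω) ∂μ =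
      ((lam + ε ^ 2) / 2 + ((T : ℝ) - 1) * ((1 - ε) * lam + ε ^ 2) / 2) * T := by
  have hterm n : ∫ ω, driftBound ε n (X n ω) ∂μ = driftBound ε n lam := by
    simp only [driftBound_eq]
    rw [integral_add ((hX n).const_mul _) (integrable_const _), integral_const_mul, hmean,
      integral_const, probReal_univ, one_smul]
  rw [integral_finsetSum _ fun n _ => integrable_driftBound (hX n),
    sum_congr rfl fun n _ => hterm n]
  exact sum_range_add_mul _ _ T

end

theorem lemma2_expected_drift_general
    {Ω : Type*} [MeasurableSpace Ω] (μ : Measure Ω) [IsProbabilityMeasure μ]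
    (X : ℕ → Ω → ℝ) (Y : ℕ → Ω → ℝ) (y₀ ε lam : ℝ) (T : ℕ)
    (hXmeas : ∀ n, Measurable (X n))
    (hX01 : ∀ n ω, X n ω = 0 ∨ X n ω = 1)
    (hmean : ∀ n, ∫ ω, X n ω ∂μ = lam)
    (hy₀ : 0 ≤ y₀) (hε0 : 0 ≤ ε) (hε1 : ε ≤ 1)
    (hY0 : ∀ ω, Y 0 ω = y₀)
    (hrec : ∀ n ω, Y (n + 1) ω = max (Y n ω + X n ω - ε) 0) :
    ∫ ω, ((1 / 2) * (Y T ω) ^ 2 - (1 / 2) * (Y 0 ω) ^ 2) ∂μ ≤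
      ((lam + ε ^ 2) / 2 + ((T : ℝ) - 1) * ((1 - ε) * lam + ε ^ 2) / 2) * T +
        y₀ * ∫ ω, (∑ n ∈ Finset.range T, (X n ω - ε)) ∂μ := by
  have hX n : Integrable (X n) μ := integrable_of_zero_or_one (hXmeas n) (hX01 n)
  have hX1 n ω : X n ω ≤ 1 := by rcases hX01 n ω with h | h <;> simp [h]
  have hYsq := integrable_sq_of_virtualQueue (μ := μ) hXmeas hX1 hy₀ hε1 hY0 hrec
  have hS : Integrable (fun ω => ∑ n ∈ range T, (X n ω - ε)) μ :=
    integrable_finsetSum _ fun n _ => (hX n).sub (integrable_const ε)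
  have hG : Integrable (fun ω => ∑ n ∈ range T, driftBound ε n (X n ω)) μ :=
    integrable_finsetSum _ fun n _ => integrable_driftBound (hX n)
  calc ∫ ω, ((1 / 2) * (Y T ω) ^ 2 - (1 / 2) * (Y 0 ω) ^ 2) ∂μ
      ≤ ∫ ω, (∑ n ∈ range T, driftBound ε n (X n ω) +
          y₀ * ∑ n ∈ range T, (X n ω - ε)) ∂μ := by
        refine integral_mono (((hYsq T).const_mul _).sub ((hYsq 0).const_mul _))
          (hG.add (hS.const_mul y₀)) fun ω => ?_
        simpa only [hY0 ω] using VirtualQueue.half_sq_sub_half_sq_le (y := (Y · ω))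
          (hrec · ω) (hX01 · ω) (hY0 ω ▸ hy₀) hε0 hε1 T
    _ = _ := by rw [integral_add hG (hS.const_mul y₀), integral_const_mul,
          integral_sum_range_driftBound hX hmean]

theorem lemma2_expected_drift
    {Ω : Type*} [MeasurableSpace Ω] (μ : Measure Ω) [IsProbabilityMeasure μ]
    (X : ℕ → Ω → ℝ) (Y : ℕ → Ω → ℝ) (y₀ ε lam : ℝ) (T : ℕ)
    (hXmeas : ∀ n, Measurable (X n))
    (hX01 : ∀ n ω, X n ω = 0 ∨ X n ω = 1)
    (hindep : iIndepFun X μ)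
    (hident : ∀ n, IdentDistrib (X n) (X 0) μ μ)
    (hlam0 : 0 ≤ lam) (hlam1 : lam ≤ 1)
    (hmean : ∀ n, ∫ ω, X n ω ∂μ = lam)
    (hy₀ : 0 ≤ y₀) (hε0 : 0 ≤ ε) (hε1 : ε ≤ 1)
    (hY0 : ∀ ω, Y 0 ω = y₀)
    (hrec : ∀ n ω, Y (n + 1) ω = max (Y n ω + X n ω - ε) 0) :
    ∫ ω, ((1 / 2) * (Y T ω) ^ 2 - (1 / 2) * (Y 0 ω) ^ 2) ∂μ ≤
      ((lam + ε ^ 2) / 2 + ((T : ℝ) - 1) * ((1 - ε) * lam + ε ^ 2) / 2) * T +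
        y₀ * ∫ ω, (∑ n ∈ Finset.range T, (X n ω - ε)) ∂μ :=
  lemma2_expected_drift_general μ X Y y₀ ε lam T hXmeas hX01 hmean hy₀ hε0 hε1 hY0 hrec
end
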